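/- (Approximation of the observation.) Assume the N×d real matrix Φ satisfies the Restricted Isometry Condition with parameters (2n, ε), where 0 < ε ≤ 0.03. Let v ∈ ℝ^d be n-sparse and let I ⊆ {1,…,d} satisfy |supp(v) ∪ I| ≤ 2n. Set x = Φv, F = range(Φ_I), r = P_{F^⊥} x, v₀ = v|_{supp(v)∖I}, x₀ = Φv₀, u₀ = Φ*x₀, and u = Φ*r. Then for every set T ⊆ {1,…,d} with |T| ≤ 2n, one has ‖(u₀ − u)|_T‖₂ ≤ 2.4 ε ‖v₀‖₂. -/

import Mathlib

/-!
Since `x - x₀ = Φ (v - v₀)` lies in `F`, the vector `p = x₀ - r` lies in `F` as well, so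
`p = Φ y` with `y` supported on `I`, and `‖p‖² = ⟪x₀, p⟫ = ⟪Φ v₀, Φ y⟫` because `r ⊥ F`.
The vectors `v₀` and `y` have disjoint supports inside `supp v ∪ I`, so near-orthogonality of
`Φ` on `2n`-sparse vectors bounds this by `2ε ‖v₀‖ ‖y‖`, while the lower RIC bound gives
`(1 - ε) ‖y‖ ≤ ‖p‖`; hence `(1 - ε) ‖p‖ ≤ 2ε ‖v₀‖`. Finally `u₀ - u = Φ* p`, whose restriction
to a set of size `2n` has norm at most `(1 + ε) ‖p‖`, and `2 (1 + ε) / (1 - ε) ≤ 2.4` for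
`ε ≤ 0.03`.
-/

open Finset

noncomputable section

/-- A vector `v ∈ ℝ^d` is `m`-sparse if its support has at most `m` elements. -/
def msparse {d : ℕ} (m : ℕ) (v : EuclideanSpace ℝ (Fin d)) : Prop :=
  (Finset.univ.filter fun i => v i ≠ 0).card ≤ m

/-- The Restricted Isometry Condition with parameters `(m, ε)`. -/
def RIC {N d : ℕ} (Φ : Matrix (Fin N) (Fin d) ℝ) (m : ℕ) (ε : ℝ) : Prop :=
  ∀ v : EuclideanSpace ℝ (Fin d), msparse m v →
    (1 - ε) * ‖v‖ ≤ ‖Matrix.toEuclideanLin Φ v‖ ∧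
    ‖Matrix.toEuclideanLin Φ v‖ ≤ (1 + ε) * ‖v‖

/-- The support of a vector, as a `Finset`. -/
def suppF {d : ℕ} (v : EuclideanSpace ℝ (Fin d)) : Finset (Fin d) :=
  Finset.univ.filter fun i => v i ≠ 0

/-- `restr S w = w|_S`: the vector equal to `w` on `S` and zero elsewhere. -/
def restr {d : ℕ} (S : Finset (Fin d)) (w : EuclideanSpace ℝ (Fin d)) :
    EuclideanSpace ℝ (Fin d) :=
  WithLp.toLp 2 (fun i => if i ∈ S then w i else 0)

/-- `colSpan Φ S = range(Φ_S)`: the span of the columns of `Φ` indexed by `S`. -/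
def colSpan {N d : ℕ} (Φ : Matrix (Fin N) (Fin d) ℝ) (S : Finset (Fin d)) :
    Submodule ℝ (EuclideanSpace ℝ (Fin N)) :=
  Submodule.span ℝ ((fun j => (WithLp.toLp 2 (fun i => Φ i j) : EuclideanSpace ℝ (Fin N))) '' (S : Set (Fin d)))

open Matrix
open scoped RealInnerProductSpace

section Support

variable {d : ℕ}

lemma suppF_subset_iff {y : EuclideanSpace ℝ (Fin d)} {S : Finset (Fin d)} :
    suppF y ⊆ S ↔ ∀ i ∉ S, y i = 0 := by
  simp only [suppF, subset_iff, mem_filter, mem_univ, true_and]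
  exact forall_congr' fun i => not_imp_comm

lemma msparse_of_suppF_subset {m : ℕ} {y : EuclideanSpace ℝ (Fin d)} {S : Finset (Fin d)}
    (h : suppF y ⊆ S) (hS : S.card ≤ m) : msparse m y :=
  (card_le_card h).trans hS

lemma suppF_restr_subset (S : Finset (Fin d)) (w : EuclideanSpace ℝ (Fin d)) :
    suppF (restr S w) ⊆ S :=
  suppF_subset_iff.2 fun i hi => by simp [restr, hi]

lemma suppF_sub_restr_sdiff_subset (w : EuclideanSpace ℝ (Fin d)) (I : Finset (Fin d)) :
    suppF (w - restr (suppF w \ I) w) ⊆ I := by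
  refine suppF_subset_iff.2 fun i hi => ?_
  by_cases hw : w i = 0 <;> simp [restr, suppF, hw, hi]

lemma inner_eq_zero_of_disjoint_suppF {a b : EuclideanSpace ℝ (Fin d)}
    (h : Disjoint (suppF a) (suppF b)) : ⟪a, b⟫ = 0 := by
  refine Finset.sum_eq_zero fun i _ => ?_
  by_cases ha : a i = 0
  · simp [ha]
  · have : b i = 0 := by
      by_contra hb
      exact disjoint_left.1 h (show i ∈ suppF a by simp [suppF, ha]) (by simp [suppF, hb])
    simp [this]

lemma inner_restr_self (S : Finset (Fin d)) (w : EuclideanSpace ℝ (Fin d)) :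
    ⟪restr S w, w⟫ = ‖restr S w‖ ^ 2 := by
  rw [← real_inner_self_eq_norm_sq]
  refine Finset.sum_congr rfl fun i _ => ?_
  by_cases hi : i ∈ S <;> simp [restr, hi]

end Support

section Matrix

variable {N d : ℕ}

lemma mem_span_basisFun_image_iff {y : EuclideanSpace ℝ (Fin d)} {S : Finset (Fin d)} :
    y ∈ Submodule.span ℝ ((EuclideanSpace.basisFun (Fin d) ℝ).toBasis '' S) ↔ suppF y ⊆ S := by
  rw [Module.Basis.mem_span_image]
  simp [suppF, Set.subset_def, subset_iff]

lemma colSpan_eq_map (Φ : Matrix (Fin N) (Fin d) ℝ) (S : Finset (Fin d)) :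
    colSpan Φ S = (Submodule.span ℝ ((EuclideanSpace.basisFun (Fin d) ℝ).toBasis '' S)).map
      (toEuclideanLin Φ) := by
  rw [Submodule.map_span, ← Set.image_comp]
  congr 2
  funext j
  ext i
  simp [mulVec, dotProduct, Pi.single_apply]

lemma mem_colSpan_iff {Φ : Matrix (Fin N) (Fin d) ℝ} {S : Finset (Fin d)}
    {w : EuclideanSpace ℝ (Fin N)} :
    w ∈ colSpan Φ S ↔ ∃ y, suppF y ⊆ S ∧ toEuclideanLin Φ y = w := by
  simp only [colSpan_eq_map, Submodule.mem_map, mem_span_basisFun_image_iff]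

lemma inner_toEuclideanLin_transpose (Φ : Matrix (Fin N) (Fin d) ℝ)
    (w : EuclideanSpace ℝ (Fin N)) (z : EuclideanSpace ℝ (Fin d)) :
    ⟪toEuclideanLin Φᵀ w, z⟫ = ⟪w, toEuclideanLin Φ z⟫ := by
  rw [← conjTranspose_eq_transpose_of_trivial, toEuclideanLin_conjTranspose_eq_adjoint,
    LinearMap.adjoint_inner_left]

end Matrix

section Projection

variable {E : Type*} [NormedAddCommGroup E] [InnerProductSpace ℝ E]
  (K : Submodule ℝ E) [K.HasOrthogonalProjection] {x x₀ : E}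

lemma sub_starProjection_orthogonal_mem (h : x - x₀ ∈ K) : x₀ - Kᗮ.starProjection x ∈ K := by
  rw [Submodule.starProjection_orthogonal_val]
  convert K.sub_mem (K.starProjection_apply_mem x) h using 1
  abel

lemma norm_sub_starProjection_orthogonal_sq (h : x - x₀ ∈ K) :
    ‖x₀ - Kᗮ.starProjection x‖ ^ 2 = ⟪x₀, x₀ - Kᗮ.starProjection x⟫ := by
  have hr : ⟪Kᗮ.starProjection x, x₀ - Kᗮ.starProjection x⟫ = 0 :=
    Submodule.inner_left_of_mem_orthogonal (sub_starProjection_orthogonal_mem K h)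
      (Kᗮ.starProjection_apply_mem x)
  rw [← real_inner_self_eq_norm_sq, inner_sub_left, hr, sub_zero]

end Projection

namespace RIC

variable {N d : ℕ} {Φ : Matrix (Fin N) (Fin d) ℝ} {m : ℕ} {ε : ℝ}

lemma inner_le_of_inner_eq_zero (hΦ : RIC Φ m ε) (hε : ε ≤ 1) {a b : EuclideanSpace ℝ (Fin d)}
    (hab : ⟪a, b⟫ = 0) (hsum : msparse m (a + b)) (hdiff : msparse m (a - b)) :
    ⟪toEuclideanLin Φ a, toEuclideanLin Φ b⟫ ≤ ε * (‖a‖ ^ 2 + ‖b‖ ^ 2) := by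
  -- polarization: `4 ⟪Φ a, Φ b⟫ = ‖Φ (a + b)‖² - ‖Φ (a - b)‖²`, and `‖a ± b‖² = ‖a‖² + ‖b‖²`
  obtain ⟨-, hsum⟩ := hΦ _ hsum
  obtain ⟨hdiff, -⟩ := hΦ _ hdiff
  have hsum_sq : ‖a + b‖ ^ 2 = ‖a‖ ^ 2 + ‖b‖ ^ 2 := by rw [norm_add_sq_real, hab]; ring
  have hdiff_sq : ‖a - b‖ ^ 2 = ‖a‖ ^ 2 + ‖b‖ ^ 2 := by rw [norm_sub_sq_real, hab]; ring
  have hup : ‖toEuclideanLin Φ (a + b)‖ ^ 2 ≤ (1 + ε) ^ 2 * ‖a + b‖ ^ 2 := by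
    rw [← mul_pow]; exact pow_le_pow_left₀ (norm_nonneg _) hsum 2
  have hlow : (1 - ε) ^ 2 * ‖a - b‖ ^ 2 ≤ ‖toEuclideanLin Φ (a - b)‖ ^ 2 := by
    rw [← mul_pow]
    exact pow_le_pow_left₀ (mul_nonneg (sub_nonneg.2 hε) (norm_nonneg _)) hdiff 2
  rw [hsum_sq, map_add, norm_add_sq_real] at hup
  rw [hdiff_sq, map_sub, norm_sub_sq_real] at hlow
  nlinarith

lemma inner_le_of_disjoint (hΦ : RIC Φ m ε) (hε : ε ≤ 1) {S S' : Finset (Fin d)}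
    (hSS' : Disjoint S S') (hcard : (S ∪ S').card ≤ m) {a b : EuclideanSpace ℝ (Fin d)}
    (ha : suppF a ⊆ S) (hb : suppF b ⊆ S') :
    ⟪toEuclideanLin Φ a, toEuclideanLin Φ b⟫ ≤ 2 * ε * ‖a‖ * ‖b‖ := by
  rcases eq_or_ne a 0 with rfl | ha0
  · simp
  rcases eq_or_ne b 0 with rfl | hb0
  · simp
  set a' := ‖a‖⁻¹ • a
  set b' := ‖b‖⁻¹ • b
  have ha' : ∀ i ∉ S, a' i = 0 := fun i hi => by simp [a', suppF_subset_iff.1 ha i hi]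
  have hb' : ∀ i ∉ S', b' i = 0 := fun i hi => by simp [b', suppF_subset_iff.1 hb i hi]
  have hsparse : ∀ c : ℝ, msparse m (a' + c • b') := fun c =>
    msparse_of_suppF_subset (suppF_subset_iff.2 fun i hi => by
      simp only [mem_union, not_or] at hi
      simp [ha' i hi.1, hb' i hi.2]) hcard
  have hortho : ⟪a', b'⟫ = 0 := inner_eq_zero_of_disjoint_suppF <|
    hSS'.mono (suppF_subset_iff.2 ha') (suppF_subset_iff.2 hb')
  have key := hΦ.inner_le_of_inner_eq_zero hε hortho (by simpa using hsparse 1)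
    (by simpa [sub_eq_add_neg] using hsparse (-1))
  have hna : 0 < ‖a‖ := norm_pos_iff.2 ha0
  have hnb : 0 < ‖b‖ := norm_pos_iff.2 hb0
  simp only [a', b', map_smul, real_inner_smul_left, real_inner_smul_right, norm_smul,
    norm_inv, norm_norm, inv_mul_cancel₀ hna.ne', inv_mul_cancel₀ hnb.ne'] at key
  calc ⟪toEuclideanLin Φ a, toEuclideanLin Φ b⟫
      = ‖a‖ * ‖b‖ * (‖b‖⁻¹ * (‖a‖⁻¹ * ⟪toEuclideanLin Φ a, toEuclideanLin Φ b⟫)) := by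
        field_simp
    _ ≤ ‖a‖ * ‖b‖ * (ε * (1 ^ 2 + 1 ^ 2)) := mul_le_mul_of_nonneg_left key (by positivity)
    _ = 2 * ε * ‖a‖ * ‖b‖ := by ring

lemma norm_restr_transpose_le (hΦ : RIC Φ m ε) (hε : 0 ≤ ε) (w : EuclideanSpace ℝ (Fin N))
    {T : Finset (Fin d)} (hT : T.card ≤ m) :
    ‖restr T (toEuclideanLin Φᵀ w)‖ ≤ (1 + ε) * ‖w‖ := by
  set z := restr T (toEuclideanLin Φᵀ w)
  have hz : ‖z‖ ^ 2 ≤ ‖z‖ * ((1 + ε) * ‖w‖) := calc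
    ‖z‖ ^ 2 = ⟪w, toEuclideanLin Φ z⟫ := by
      rw [← inner_restr_self, real_inner_comm, inner_toEuclideanLin_transpose]
    _ ≤ ‖w‖ * ‖toEuclideanLin Φ z‖ := real_inner_le_norm _ _
    _ ≤ ‖w‖ * ((1 + ε) * ‖z‖) :=
      mul_le_mul_of_nonneg_left (hΦ z (msparse_of_suppF_subset (suppF_restr_subset _ _) hT)).2
        (norm_nonneg w)
    _ = ‖z‖ * ((1 + ε) * ‖w‖) := by ring
  rcases (norm_nonneg z).eq_or_lt with h0 | hpos
  · rw [← h0]; positivity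
  · rw [sq] at hz; exact le_of_mul_le_mul_left hz hpos

lemma mul_norm_apply_le_of_sq_le (hΦ : RIC Φ m ε) (hε : ε ≤ 1) {y : EuclideanSpace ℝ (Fin d)}
    (hy : msparse m y) {B : ℝ} (hB : 0 ≤ B) (h : ‖toEuclideanLin Φ y‖ ^ 2 ≤ B * ‖y‖) :
    (1 - ε) * ‖toEuclideanLin Φ y‖ ≤ B := by
  set A := ‖toEuclideanLin Φ y‖
  have hlow : (1 - ε) * ‖y‖ ≤ A := (hΦ y hy).1
  by_cases h0 : A = 0
  · simpa [h0] using hB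
  · have hpos : 0 < A := (norm_nonneg _).lt_of_ne' h0
    refine le_of_mul_le_mul_left ?_ hpos
    calc A * ((1 - ε) * A) = (1 - ε) * A ^ 2 := by ring
      _ ≤ (1 - ε) * (B * ‖y‖) := mul_le_mul_of_nonneg_left h (sub_nonneg.2 hε)
      _ = B * ((1 - ε) * ‖y‖) := by ring
      _ ≤ B * A := mul_le_mul_of_nonneg_left hlow hB
      _ = A * B := mul_comm _ _

end RIC

theorem approximation_of_observation_general {N d n : ℕ} (Φ : Matrix (Fin N) (Fin d) ℝ)
    (ε : ℝ) (hε : 0 < ε) (hε' : ε ≤ 0.03) (hΦ : RIC Φ (2 * n) ε)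
    (v : EuclideanSpace ℝ (Fin d))
    (I : Finset (Fin d)) (hI : (suppF v ∪ I).card ≤ 2 * n)
    (x r x₀ : EuclideanSpace ℝ (Fin N)) (v₀ u₀ u : EuclideanSpace ℝ (Fin d))
    (hx : x = Matrix.toEuclideanLin Φ v)
    (hr : r = (Submodule.orthogonalProjection (colSpan Φ I)ᗮ x : EuclideanSpace ℝ (Fin N)))
    (hv₀ : v₀ = restr (suppF v \ I) v)
    (hx₀ : x₀ = Matrix.toEuclideanLin Φ v₀)
    (hu₀ : u₀ = Matrix.toEuclideanLin Φ.transpose x₀)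
    (hu : u = Matrix.toEuclideanLin Φ.transpose r)
    (T : Finset (Fin d)) (hT : T.card ≤ 2 * n) :
    ‖restr T (u₀ - u)‖ ≤ 2.4 * ε * ‖v₀‖ := by
  have hε1 : ε ≤ 1 := by linarith
  have hxx₀ : x - x₀ ∈ colSpan Φ I :=
    mem_colSpan_iff.2 ⟨v - v₀, hv₀ ▸ suppF_sub_restr_sdiff_subset v I, by rw [map_sub, hx, hx₀]⟩
  replace hr : r = (colSpan Φ I)ᗮ.starProjection x := hr
  obtain ⟨y, hyI, hy⟩ := mem_colSpan_iff.1 (sub_starProjection_orthogonal_mem _ hxx₀)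
  have hp_sq : ‖toEuclideanLin Φ y‖ ^ 2 ≤ 2 * ε * ‖v₀‖ * ‖y‖ := by
    rw [hy, norm_sub_starProjection_orthogonal_sq _ hxx₀, ← hy, hx₀]
    exact hΦ.inner_le_of_disjoint hε1 disjoint_sdiff_self_left
      (by rwa [sdiff_union_self_eq_union]) (hv₀ ▸ suppF_restr_subset _ _) hyI
  have hp : (1 - ε) * ‖toEuclideanLin Φ y‖ ≤ 2 * ε * ‖v₀‖ :=
    hΦ.mul_norm_apply_le_of_sq_le hε1
      (msparse_of_suppF_subset hyI ((card_le_card subset_union_right).trans hI))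
      (by positivity) (by linarith)
  have huu : u₀ - u = toEuclideanLin Φᵀ (toEuclideanLin Φ y) := by
    rw [hy, hu₀, hu, hr, map_sub]
  calc ‖restr T (u₀ - u)‖ ≤ (1 + ε) * ‖toEuclideanLin Φ y‖ :=
        huu ▸ hΦ.norm_restr_transpose_le hε.le _ hT
    _ ≤ 2.4 * ε * ‖v₀‖ := by nlinarith [norm_nonneg (toEuclideanLin Φ y)]

/-- Approximation of the observation: under RIC with parameters `(2n, ε)`, `0 < ε ≤ 0.03`,
with `x = Φv`, `F = range(Φ_I)`, `r = P_{F^⊥} x`, `v₀ = v|_{supp(v)∖I}`, `x₀ = Φv₀`,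
`u₀ = Φ*x₀`, `u = Φ*r`, one has `‖(u₀ − u)|_T‖₂ ≤ 2.4 ε ‖v₀‖₂` for every `T` with
`|T| ≤ 2n`. -/
theorem approximation_of_observation {N d n : ℕ} (Φ : Matrix (Fin N) (Fin d) ℝ)
    (ε : ℝ) (hε : 0 < ε) (hε' : ε ≤ 0.03) (hΦ : RIC Φ (2 * n) ε)
    (v : EuclideanSpace ℝ (Fin d)) (hv : msparse n v)
    (I : Finset (Fin d)) (hI : (suppF v ∪ I).card ≤ 2 * n)
    (x r x₀ : EuclideanSpace ℝ (Fin N)) (v₀ u₀ u : EuclideanSpace ℝ (Fin d))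
    (hx : x = Matrix.toEuclideanLin Φ v)
    (hr : r = (Submodule.orthogonalProjection (colSpan Φ I)ᗮ x : EuclideanSpace ℝ (Fin N)))
    (hv₀ : v₀ = restr (suppF v \ I) v)
    (hx₀ : x₀ = Matrix.toEuclideanLin Φ v₀)
    (hu₀ : u₀ = Matrix.toEuclideanLin Φ.transpose x₀)
    (hu : u = Matrix.toEuclideanLin Φ.transpose r)
    (T : Finset (Fin d)) (hT : T.card ≤ 2 * n) :
    ‖restr T (u₀ - u)‖ ≤ 2.4 * ε * ‖v₀‖ :=
  approximation_of_observation_general Φ ε hε hε' hΦ v I hI x r x₀ v₀ u₀ u hx hr hv₀ hx₀ hu₀ hu T hT
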